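/- In the Bayesian investment model with discrete prior, for every γ > 0, every 0 ≤ t < T, every y ∈ ℝ^d and every coordinate i ∈ {1, …, d}, the i-th component of the optimal investment fraction satisfies γ · min_{1 ≤ k ≤ m} ⟨(σ^⊤)^{−1}_i, ϑ_k⟩ ≤ κ_i(t, T, y) ≤ γ · max_{1 ≤ k ≤ m} ⟨(σ^⊤)^{−1}_i, ϑ_k⟩, where (σ^⊤)^{−1}_i denotes the i-th row of (σ^⊤)^{−1}. -/

import Mathlib

open MeasureTheory Real Filter

/-- Density of the `N(0, T·I_d)` distribution on `ℝ^d`. -/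
noncomputable def gaussDensity (d : ℕ) (T : ℝ) (z : Fin d → ℝ) : ℝ :=
  (2 * π * T) ^ (-(d : ℝ) / 2) * Real.exp (-(∑ i, z i ^ 2) / (2 * T))

/-- Likelihood factor `L_t(ϑ, z) = exp(⟨z, ϑ⟩ - ½‖ϑ‖²t)`. -/
noncomputable def likelihood (d : ℕ) (t : ℝ) (ϑ z : Fin d → ℝ) : ℝ :=
  Real.exp ((∑ i, z i * ϑ i) - (∑ i, ϑ i ^ 2) * t / 2)

/-- `F(t, z) = ∑_k p_k L_t(ϑ_k, z)` for the discrete prior `(p_k, ϑ_k)`. -/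
noncomputable def priorF (d m : ℕ) (p : Fin m → ℝ) (ϑ : Fin m → Fin d → ℝ)
    (t : ℝ) (z : Fin d → ℝ) : ℝ :=
  ∑ k, p k * likelihood d t (ϑ k) z

/-- Optimal Bayesian investment fraction
`κ(t, T, y) = γ (σᵀ)⁻¹ [∫ (∑_k p_k ϑ_k L_T(ϑ_k, y+z)) F(T, y+z)^{γ-1} φ_{T-t}(z) dz] /
[∫ F(T, y+z)^γ φ_{T-t}(z) dz]`. -/
noncomputable def kappa (d m : ℕ) (σ : Matrix (Fin d) (Fin d) ℝ)
    (p : Fin m → ℝ) (ϑ : Fin m → Fin d → ℝ) (γ t T : ℝ) (y : Fin d → ℝ) :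
    Fin d → ℝ :=
  γ • ((σ.transpose)⁻¹).mulVec
    ((∫ z : Fin d → ℝ, priorF d m p ϑ T (y + z) ^ γ * gaussDensity d (T - t) z)⁻¹ •
      ∫ z : Fin d → ℝ,
        (priorF d m p ϑ T (y + z) ^ (γ - 1) * gaussDensity d (T - t) z) •
          ∑ k, (p k * likelihood d T (ϑ k) (y + z)) • ϑ k)

lemma gaussDensity_pos {d : ℕ} {s : ℝ} (hs : 0 < s) (z : Fin d → ℝ) :
    0 < gaussDensity d s z := by
  unfold gaussDensity
  have : (0:ℝ) < 2 * π * s := by positivity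
  positivity

lemma integrable_expAffine_gauss {d : ℕ} {s : ℝ} (hs : 0 < s) (a : Fin d → ℝ) (c : ℝ) :
    Integrable (fun z : Fin d → ℝ =>
      Real.exp ((∑ i, a i * z i) + c) * gaussDensity d s z) := by
  have h1 : ∀ b : ℝ, Integrable (fun x : ℝ => Real.exp (b * x - x ^ 2 / (2 * s))) := by
    intro b
    apply Integrable.mono' (g := fun x => Real.exp (b^2 * s) * Real.exp (-(1/(4*s)) * x ^ 2))
    · exact (integrable_exp_neg_mul_sq (by positivity)).const_mul _
    · exact (Real.continuous_exp.comp (by continuity)).aestronglyMeasurable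
    · refine Filter.Eventually.of_forall fun x => ?_
      rw [Real.norm_eq_abs, abs_of_pos (Real.exp_pos _), ← Real.exp_add]
      apply Real.exp_le_exp.2
      have h : b * x - x ^ 2 / (2 * s) - (b ^ 2 * s + -(1 / (4 * s)) * x ^ 2)
          = -(x - 2*b*s)^2 / (4*s) := by field_simp; ring
      rw [neg_div] at h
      nlinarith [div_nonneg (sq_nonneg (x - 2*b*s)) (by positivity : (0:ℝ) ≤ 4*s)]
  have hprod : Integrable (fun z : Fin d → ℝ =>
      ∏ i, Real.exp (a i * z i - z i ^ 2 / (2 * s))) :=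
    Integrable.fintype_prod (fun i => h1 (a i))
  have heq : (fun z : Fin d → ℝ => Real.exp ((∑ i, a i * z i) + c) * gaussDensity d s z)
      = fun z => (Real.exp c * (2 * π * s) ^ (-(d:ℝ)/2)) *
        ∏ i, Real.exp (a i * z i - z i ^ 2 / (2 * s)) := by
    funext z
    rw [← Real.exp_sum]
    unfold gaussDensity
    have : ∑ i, (a i * z i - z i ^ 2 / (2 * s))
        = ((∑ i, a i * z i) + c) + (-(∑ i, z i ^ 2) / (2 * s)) + (-c) := by
      rw [Finset.sum_sub_distrib, ← Finset.sum_div]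
      ring
    rw [this]
    simp only [Real.exp_add]
    have h1 : Real.exp c * Real.exp (-c) = 1 := by rw [← Real.exp_add]; simp
    linear_combination -(Real.exp (∑ i, a i * z i) * Real.exp c * (2 * π * s) ^ (-(d:ℝ)/2) *
      Real.exp ((-(∑ i, z i ^ 2)) / (2 * s))) * h1
  rw [heq]
  exact hprod.const_mul _

lemma likelihood_shift {d : ℕ} (T : ℝ) (w y z : Fin d → ℝ) :
    likelihood d T w (y + z)
      = Real.exp ((∑ i, w i * z i) +
          ((∑ i, y i * w i) - (∑ i, w i ^ 2) * T / 2)) := by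
  unfold likelihood
  congr 1
  have h : ∑ i, (y + z) i * w i = (∑ i, w i * z i) + ∑ i, y i * w i := by
    simp only [Pi.add_apply, add_mul]
    rw [Finset.sum_add_distrib, add_comm]
    congr 1
    exact Finset.sum_congr rfl fun i _ => mul_comm _ _
  rw [h]; ring

lemma priorF_pos {d m : ℕ} (hm : 1 ≤ m) {p : Fin m → ℝ} (hp : ∀ k, 0 < p k)
    (ϑ : Fin m → Fin d → ℝ) (T : ℝ) (z : Fin d → ℝ) : 0 < priorF d m p ϑ T z :=
  Finset.sum_pos (fun k _ => mul_pos (hp k) (Real.exp_pos _))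
    ⟨⟨0, hm⟩, Finset.mem_univ _⟩

lemma priorF_cont {d m : ℕ} (p : Fin m → ℝ) (ϑ : Fin m → Fin d → ℝ) (T : ℝ)
    (y : Fin d → ℝ) : Continuous fun z : Fin d → ℝ => priorF d m p ϑ T (y + z) := by
  unfold priorF likelihood
  apply continuous_finset_sum; intro k _
  refine continuous_const.mul (Real.continuous_exp.comp ?_)
  refine Continuous.sub ?_ continuous_const
  apply continuous_finset_sum; intro i _
  exact ((continuous_apply i).comp (continuous_const.add continuous_id)).mul continuous_const

lemma gauss_cont {d : ℕ} (s : ℝ) : Continuous (gaussDensity d s) := by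
  unfold gaussDensity
  exact continuous_const.mul (Real.continuous_exp.comp (by continuity))

lemma integrable_priorF_rpow {d m : ℕ} {s : ℝ} (hs : 0 < s) (hm : 1 ≤ m)
    {p : Fin m → ℝ} (hp : ∀ k, 0 < p k) (hpsum : ∑ k, p k = 1)
    (ϑ : Fin m → Fin d → ℝ) (T : ℝ) (y : Fin d → ℝ) (α : ℝ) (a : Fin d → ℝ) (c : ℝ) :
    Integrable (fun z : Fin d → ℝ => priorF d m p ϑ T (y + z) ^ α *
      (Real.exp ((∑ i, a i * z i) + c) * gaussDensity d s z)) := by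
  set C : Fin m → ℝ := fun k => (∑ i, y i * ϑ k i) - (∑ i, ϑ k i ^ 2) * T / 2 with hC
  have hL : ∀ (k : Fin m) (z : Fin d → ℝ),
      likelihood d T (ϑ k) (y + z) = Real.exp ((∑ i, ϑ k i * z i) + C k) :=
    fun k z => likelihood_shift T (ϑ k) y z
  have hFpos : ∀ z, 0 < priorF d m p ϑ T (y + z) := fun z => priorF_pos hm hp ϑ T _
  have hterm : ∀ (b : ℝ), 0 < b → ∀ (k : Fin m), Integrable (fun z : Fin d → ℝ =>
      (b * likelihood d T (ϑ k) (y + z)) ^ α *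
      (Real.exp ((∑ i, a i * z i) + c) * gaussDensity d s z)) := by
    intro b hb k
    have heq : (fun z : Fin d → ℝ => (b * likelihood d T (ϑ k) (y + z)) ^ α *
        (Real.exp ((∑ i, a i * z i) + c) * gaussDensity d s z))
        = fun z => (b ^ α) *
          (Real.exp ((∑ i, (α * ϑ k i + a i) * z i) + (α * C k + c)) * gaussDensity d s z) := by
      funext z
      rw [hL k z, Real.mul_rpow hb.le (Real.exp_pos _).le, ← Real.exp_mul]
      have harg : (∑ i, (α * ϑ k i + a i) * z i) + (α * C k + c)
          = (((∑ i, ϑ k i * z i) + C k) * α) + ((∑ i, a i * z i) + c) := by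
        have h2 : ∑ i, (α * ϑ k i + a i) * z i
            = α * (∑ i, ϑ k i * z i) + ∑ i, a i * z i := by
          rw [Finset.mul_sum, ← Finset.sum_add_distrib]
          exact Finset.sum_congr rfl fun i _ => by ring
        rw [h2]; ring
      rw [harg]
      simp only [Real.exp_add]
      ring
    rw [heq]
    exact (integrable_expAffine_gauss hs _ _).const_mul _
  apply Integrable.mono' (g := fun z => ∑ k,
      (((m:ℝ) * likelihood d T (ϑ k) (y + z)) ^ α
        + (p k * likelihood d T (ϑ k) (y + z)) ^ α) *
      (Real.exp ((∑ i, a i * z i) + c) * gaussDensity d s z))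
  · apply integrable_finset_sum; intro k _
    simp_rw [add_mul]
    exact (hterm _ (by exact_mod_cast Nat.lt_of_lt_of_le Nat.zero_lt_one hm) k).add
      (hterm _ (hp k) k)
  · refine Continuous.aestronglyMeasurable ?_
    refine Continuous.mul ?_ (Continuous.mul (Real.continuous_exp.comp (by continuity))
      (gauss_cont s))
    exact (priorF_cont p ϑ T y).rpow_const fun z => Or.inl (hFpos z).ne'
  · refine Eventually.of_forall fun z => ?_
    have hEφ : 0 < Real.exp ((∑ i, a i * z i) + c) * gaussDensity d s z :=
      mul_pos (Real.exp_pos _) (gaussDensity_pos hs z)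
    rw [Real.norm_eq_abs, abs_of_nonneg
      (mul_nonneg (Real.rpow_nonneg (hFpos z).le α) hEφ.le)]
    have hLpos : ∀ k, 0 < likelihood d T (ϑ k) (y + z) := fun k => Real.exp_pos _
    have hnn : ∀ k ∈ Finset.univ, (0:ℝ) ≤ ((m:ℝ) * likelihood d T (ϑ k) (y + z)) ^ α
        + (p k * likelihood d T (ϑ k) (y + z)) ^ α := fun k _ => by
      have := hLpos k; have := hp k
      have h0 : (0:ℝ) < m := by exact_mod_cast Nat.lt_of_lt_of_le Nat.zero_lt_one hm
      exact add_nonneg (Real.rpow_nonneg (by positivity) α)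
        (Real.rpow_nonneg (by positivity) α)
    have hkey : priorF d m p ϑ T (y + z) ^ α
        ≤ ∑ k, (((m:ℝ) * likelihood d T (ϑ k) (y + z)) ^ α
          + (p k * likelihood d T (ϑ k) (y + z)) ^ α) := by
      rcases le_or_gt 0 α with hα | hα
      · obtain ⟨k₀, -, hk₀⟩ := Finset.exists_max_image Finset.univ
          (fun k => likelihood d T (ϑ k) (y + z)) ⟨⟨0, hm⟩, Finset.mem_univ _⟩
        have h1 : priorF d m p ϑ T (y + z) ≤ (m:ℝ) * likelihood d T (ϑ k₀) (y + z) := by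
          unfold priorF
          calc ∑ k, p k * likelihood d T (ϑ k) (y + z)
              ≤ ∑ k, p k * likelihood d T (ϑ k₀) (y + z) :=
                Finset.sum_le_sum fun k _ =>
                  mul_le_mul_of_nonneg_left (hk₀ k (Finset.mem_univ k)) (hp k).le
            _ = likelihood d T (ϑ k₀) (y + z) := by rw [← Finset.sum_mul, hpsum, one_mul]
            _ ≤ (m:ℝ) * likelihood d T (ϑ k₀) (y + z) :=
                le_mul_of_one_le_left (hLpos k₀).le (by exact_mod_cast hm)
        calc priorF d m p ϑ T (y + z) ^ α
            ≤ ((m:ℝ) * likelihood d T (ϑ k₀) (y + z)) ^ α :=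
              Real.rpow_le_rpow (hFpos z).le h1 hα
          _ ≤ _ := by
              refine le_trans (le_add_of_nonneg_right (Real.rpow_nonneg
                (show (0:ℝ) ≤ p k₀ * likelihood d T (ϑ k₀) (y + z) by
                  have := hp k₀; have := hLpos k₀; positivity) α)) ?_
              exact Finset.single_le_sum hnn (Finset.mem_univ k₀)
      · have h1 : p ⟨0, hm⟩ * likelihood d T (ϑ ⟨0, hm⟩) (y + z)
            ≤ priorF d m p ϑ T (y + z) :=
          Finset.single_le_sum (fun k _ => (mul_pos (hp k) (hLpos k)).le)
            (Finset.mem_univ (⟨0, hm⟩ : Fin m))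
        calc priorF d m p ϑ T (y + z) ^ α
            ≤ (p ⟨0, hm⟩ * likelihood d T (ϑ ⟨0, hm⟩) (y + z)) ^ α :=
              Real.rpow_le_rpow_of_nonpos (mul_pos (hp _) (hLpos _)) h1 hα.le
          _ ≤ _ := by
              have h0 : (0:ℝ) < m := by
                exact_mod_cast Nat.lt_of_lt_of_le Nat.zero_lt_one hm
              have := hLpos (⟨0, hm⟩ : Fin m)
              refine le_trans (le_add_of_nonneg_left (Real.rpow_nonneg
                (show (0:ℝ) ≤ (m:ℝ) * likelihood d T (ϑ ⟨0, hm⟩) (y + z) by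
                  positivity) α)) ?_
              exact Finset.single_le_sum hnn (Finset.mem_univ (⟨0, hm⟩ : Fin m))
    refine le_trans (mul_le_mul_of_nonneg_right hkey hEφ.le) ?_
    rw [Finset.sum_mul]

/-- Componentwise bounds on the Bayesian optimal investment fraction: for each coordinate `i`,
`γ · min_k ⟨(σᵀ)⁻¹_i, ϑ_k⟩ ≤ κ_i(t, T, y) ≤ γ · max_k ⟨(σᵀ)⁻¹_i, ϑ_k⟩`, where `(σᵀ)⁻¹_i`
is the `i`-th row of `(σᵀ)⁻¹`. -/
theorem stmt_12 (d m : ℕ) (hd : 1 ≤ d) (hm : 1 ≤ m)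
    (σ : Matrix (Fin d) (Fin d) ℝ) (hσ : IsUnit σ.det)
    (p : Fin m → ℝ) (hp : ∀ k, 0 < p k) (hpsum : ∑ k, p k = 1)
    (ϑ : Fin m → Fin d → ℝ) (γ : ℝ) (hγ : 0 < γ)
    (t T : ℝ) (ht : 0 ≤ t) (htT : t < T) (y : Fin d → ℝ) :
    ∀ i : Fin d,
      γ * (Finset.univ.inf' ⟨⟨0, by omega⟩, Finset.mem_univ _⟩
          fun k : Fin m => ∑ j, (σ.transpose)⁻¹ i j * ϑ k j)
        ≤ kappa d m σ p ϑ γ t T y i ∧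
      kappa d m σ p ϑ γ t T y i
        ≤ γ * (Finset.univ.sup' ⟨⟨0, by omega⟩, Finset.mem_univ _⟩
          fun k : Fin m => ∑ j, (σ.transpose)⁻¹ i j * ϑ k j) := by
  intro i
  have hs : (0:ℝ) < T - t := sub_pos.2 htT
  set c : Fin m → ℝ := fun k => ∑ j, (σ.transpose)⁻¹ i j * ϑ k j with hc
  set f : Fin m → (Fin d → ℝ) → ℝ := fun k z =>
    priorF d m p ϑ T (y + z) ^ (γ - 1) * gaussDensity d (T - t) z *
      (p k * likelihood d T (ϑ k) (y + z)) with hfdef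
  set D : ℝ := ∫ z : Fin d → ℝ, priorF d m p ϑ T (y + z) ^ γ * gaussDensity d (T - t) z
    with hD
  set I : Fin m → ℝ := fun k => ∫ z : Fin d → ℝ, f k z with hI
  set N : ℝ := ∫ z : Fin d → ℝ, ∑ k, c k * f k z with hN
  have hGpos : ∀ z : Fin d → ℝ, 0 < priorF d m p ϑ T (y + z) :=
    fun z => priorF_pos hm hp ϑ T _
  have hgpos : ∀ z : Fin d → ℝ, 0 < gaussDensity d (T - t) z := gaussDensity_pos hs
  -- integrability
  have hID : Integrable (fun z : Fin d → ℝ =>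
      priorF d m p ϑ T (y + z) ^ γ * gaussDensity d (T - t) z) := by
    have := integrable_priorF_rpow hs hm hp hpsum ϑ T y γ 0 0
    simpa using this
  have hIf : ∀ k, Integrable (f k) := by
    intro k
    have h0 := integrable_priorF_rpow hs hm hp hpsum ϑ T y (γ - 1) (ϑ k)
      ((∑ i, y i * ϑ k i) - (∑ i, ϑ k i ^ 2) * T / 2)
    have h1 : Integrable (fun z : Fin d → ℝ =>
        priorF d m p ϑ T (y + z) ^ (γ - 1) *
          (likelihood d T (ϑ k) (y + z) * gaussDensity d (T - t) z)) := by
      refine h0.congr (Eventually.of_forall fun z => ?_)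
      simp only [likelihood_shift T (ϑ k) y]
    refine (h1.const_mul (p k)).congr (Eventually.of_forall fun z => ?_)
    simp only [hfdef]
    ring
  have hHint : Integrable (fun z : Fin d → ℝ => ∑ k, c k * f k z) :=
    integrable_finset_sum _ fun k _ => (hIf k).const_mul _
  -- pointwise sum of f
  have hsum_f : ∀ z : Fin d → ℝ, ∑ k, f k z
      = priorF d m p ϑ T (y + z) ^ γ * gaussDensity d (T - t) z := by
    intro z
    have h1 : ∑ k, f k z
        = (priorF d m p ϑ T (y + z) ^ (γ - 1) * gaussDensity d (T - t) z) *
          ∑ k, p k * likelihood d T (ϑ k) (y + z) := by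
      rw [Finset.mul_sum]
    have h2 : ∑ k, p k * likelihood d T (ϑ k) (y + z) = priorF d m p ϑ T (y + z) := rfl
    have h3 : priorF d m p ϑ T (y + z) ^ (γ - 1) * priorF d m p ϑ T (y + z)
        = priorF d m p ϑ T (y + z) ^ γ := by
      rw [← Real.rpow_add_one (hGpos z).ne' (γ - 1), sub_add_cancel]
    rw [h1, h2, ← h3]; ring
  -- the vector integral
  have hVeq : (∫ z : Fin d → ℝ,
        (priorF d m p ϑ T (y + z) ^ (γ - 1) * gaussDensity d (T - t) z) •
          ∑ k, (p k * likelihood d T (ϑ k) (y + z)) • ϑ k)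
      = ∑ k, I k • ϑ k := by
    have h1 : (fun z : Fin d → ℝ =>
        (priorF d m p ϑ T (y + z) ^ (γ - 1) * gaussDensity d (T - t) z) •
          ∑ k, (p k * likelihood d T (ϑ k) (y + z)) • ϑ k)
        = fun z => ∑ k, f k z • ϑ k := by
      funext z
      rw [Finset.smul_sum]
      exact Finset.sum_congr rfl fun k _ => by rw [smul_smul]
    rw [h1, integral_finset_sum _ fun k _ => (hIf k).smul_const (ϑ k)]
    exact Finset.sum_congr rfl fun k _ => by rw [integral_smul_const]
  -- value of kappa
  have hVal : kappa d m σ p ϑ γ t T y i = γ * (D⁻¹ * N) := by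
    rw [kappa, hVeq]
    simp only [Pi.smul_apply, Matrix.mulVec, dotProduct, Finset.sum_apply,
      smul_eq_mul]
    congr 1
    have hNI : ∑ k, c k * I k = N := by
      rw [hN]
      rw [integral_finset_sum _ fun k _ => (hIf k).const_mul (c k)]
      exact Finset.sum_congr rfl fun k _ => by rw [integral_const_mul]
    rw [← hD, ← hNI]
    simp only [hc]
    simp only [Finset.mul_sum, Finset.sum_mul]
    rw [Finset.sum_comm]
    exact Finset.sum_congr rfl fun k _ => Finset.sum_congr rfl fun j _ => by ring
  -- positivity of D
  have hDpos : 0 < D := by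
    rw [hD, integral_pos_iff_support_of_nonneg
      (fun z => (mul_pos (Real.rpow_pos_of_pos (hGpos z) γ) (hgpos z)).le) hID]
    have : Function.support (fun z : Fin d → ℝ =>
        priorF d m p ϑ T (y + z) ^ γ * gaussDensity d (T - t) z) = Set.univ :=
      Set.eq_univ_of_forall fun z =>
        (mul_pos (Real.rpow_pos_of_pos (hGpos z) γ) (hgpos z)).ne'
    rw [this]
    exact isOpen_univ.measure_pos _ ⟨0, trivial⟩
  have hf_nonneg : ∀ k (z : Fin d → ℝ), 0 ≤ f k z := by
    intro k z
    have h1 := (hGpos z); have h2 := hgpos z; have h3 := hp k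
    have h4 := Real.exp_pos ((∑ i, (y + z) i * ϑ k i) - (∑ i, ϑ k i ^ 2) * T / 2)
    have h5 : (0:ℝ) ≤ priorF d m p ϑ T (y + z) ^ (γ - 1) :=
      Real.rpow_nonneg h1.le _
    simp only [hfdef]
    have h6 : 0 < likelihood d T (ϑ k) (y + z) := Real.exp_pos _
    positivity
  -- bounds
  refine ⟨?_, ?_⟩
  · set M : ℝ := Finset.univ.inf' ⟨⟨0, by omega⟩, Finset.mem_univ _⟩ c with hM
    have hpt : ∀ z : Fin d → ℝ, M * (priorF d m p ϑ T (y + z) ^ γ *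
        gaussDensity d (T - t) z) ≤ ∑ k, c k * f k z := by
      intro z
      rw [← hsum_f z, Finset.mul_sum]
      exact Finset.sum_le_sum fun k _ =>
        mul_le_mul_of_nonneg_right (Finset.inf'_le c (Finset.mem_univ k)) (hf_nonneg k z)
    have hlow : M * D ≤ N := by
      rw [hD, hN, ← integral_const_mul]
      exact integral_mono (hID.const_mul M) hHint hpt
    rw [hVal]
    refine mul_le_mul_of_nonneg_left ?_ hγ.le
    rw [inv_mul_eq_div, le_div_iff₀ hDpos]
    exact hlow
  · set M : ℝ := Finset.univ.sup' ⟨⟨0, by omega⟩, Finset.mem_univ _⟩ c with hM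
    have hpt : ∀ z : Fin d → ℝ, ∑ k, c k * f k z ≤ M * (priorF d m p ϑ T (y + z) ^ γ *
        gaussDensity d (T - t) z) := by
      intro z
      rw [← hsum_f z, Finset.mul_sum]
      exact Finset.sum_le_sum fun k _ =>
        mul_le_mul_of_nonneg_right (Finset.le_sup' c (Finset.mem_univ k)) (hf_nonneg k z)
    have hup : N ≤ M * D := by
      rw [hD, hN, ← integral_const_mul]
      exact integral_mono hHint (hID.const_mul M) hpt
    rw [hVal]
    refine mul_le_mul_of_nonneg_left ?_ hγ.le
    rw [inv_mul_eq_div, div_le_iff₀ hDpos]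
    exact hup
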